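/- Let m ≥ 1, let T be a non-self-overlapping m-bit template, and let M satisfy L := M−m+1 ≥ m. Let c be the occurrence count of T in a block B drawn uniformly at random from the 2^M equiprobable M-bit blocks. Then Var(c) = L/2^m − ((2m−1)L − m(m−1))/2^{2m}. -/

import Mathlib

open scoped Classical

/-- `T` occurs in the block `B` at position `k`: `B (k+i) = T i` for all `i < m`. -/
def occursAt {m M : ℕ} (T : Fin m → Bool) (B : Fin M → Bool) (k : ℕ) : Prop :=
  ∀ i : Fin m, ∀ h : k + i.1 < M, B ⟨k + i.1, h⟩ = T i

/-- The number of occurrences of the template `T` in the block `B`. -/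
noncomputable def occCount {m M : ℕ} (T : Fin m → Bool) (B : Fin M → Bool) : ℕ :=
  ((Finset.range (M + 1 - m)).filter (fun k => occursAt T B k)).card

/-- `T` is non-self-overlapping. -/
def NonSelfOverlapping {m : ℕ} (T : Fin m → Bool) : Prop :=
  ∀ k : ℕ, 1 ≤ k → k ≤ m - 1 → ∃ i : ℕ, ∃ h : i < m - k,
    T ⟨i, by omega⟩ ≠ T ⟨i + k, by omega⟩

/-- Expectation of `f` when the block is drawn uniformly from the `2^M` `M`-bit blocks. -/
noncomputable def unifExp (M : ℕ) (f : (Fin M → Bool) → ℝ) : ℝ :=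
  (∑ B : Fin M → Bool, f B) / 2 ^ M

/-! Write `c = ∑_{k < L} X_k`, with `X_k` the indicator of an occurrence at `k`. An occurrence at
`k` fixes the `m` bits of the window `[k, k + m)`, so `E X_k = 2^{-m}`, and occurrences at `k`, `l`
with `|k - l| ≥ m` fix `2m` bits, so `E (X_k X_l) = 2^{-2m}`. If `0 < |k - l| < m`, the two
occurrences would make `T` agree with its own shift by `|k - l|`, which non-self-overlap forbids,
so `X_k X_l = 0`. Exactly `(L - m)(L - m + 1)` of the `L²` ordered pairs are at distance `≥ m`,
hence `E c² = L 2^{-m} + (L - m)(L - m + 1) 2^{-2m}`. -/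

open Finset

theorem card_filter_forall_mem_eq {ι β : Type*} [Fintype ι] [DecidableEq ι] [Fintype β]
    (s : Finset ι) (g : ι → β) [DecidablePred fun f : ι → β => ∀ j ∈ s, f j = g j] :
    #(univ.filter fun f : ι → β => ∀ j ∈ s, f j = g j)
      = Fintype.card β ^ (Fintype.card ι - #s) := by
  have hpi : (univ.filter fun f : ι → β => ∀ j ∈ s, f j = g j)
      = Fintype.piFinset fun j => if j ∈ s then {g j} else univ := by
    ext f
    simp only [mem_filter, mem_univ, true_and, Fintype.mem_piFinset]
    refine forall_congr' fun j => ?_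
    split_ifs with hj <;> simp [hj]
  rw [hpi, Fintype.card_piFinset]
  simp only [apply_ite card, card_singleton, card_univ]
  rw [prod_ite, prod_const_one, one_mul, prod_const, filter_not, card_sdiff, card_univ]
  simp

theorem Finset.forall_mem_union_piecewise {ι β : Type*} [DecidableEq ι] {s t : Finset ι}
    (hst : Disjoint s t) (f g h : ι → β) :
    ((∀ j ∈ s, f j = g j) ∧ ∀ j ∈ t, f j = h j)
      ↔ ∀ j ∈ s ∪ t, f j = s.piecewise g h j := by
  rw [forall_mem_union]
  refine and_congr (forall₂_congr fun j hj => by rw [piecewise_eq_of_mem _ _ _ hj])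
    (forall₂_congr fun j hj => by rw [piecewise_eq_of_notMem _ _ _ (disjoint_right.1 hst hj)])

theorem unifExp_sum {α : Type*} (M : ℕ) (s : Finset α) (f : α → (Fin M → Bool) → ℝ) :
    unifExp M (fun B => ∑ a ∈ s, f a B) = ∑ a ∈ s, unifExp M (f a) := by
  simp only [unifExp]
  rw [sum_comm, sum_div]

theorem unifExp_ite_forall_mem_eq {M : ℕ} (s : Finset (Fin M)) (g : Fin M → Bool) :
    unifExp M (fun B => if ∀ j ∈ s, B j = g j then 1 else 0) = (2 ^ #s)⁻¹ := by
  have hs : #s ≤ M := by simpa using card_le_univ s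
  rw [unifExp, ← natCast_card_filter, card_filter_forall_mem_eq, Fintype.card_bool,
    Fintype.card_fin, Nat.cast_pow, Nat.cast_ofNat, pow_sub₀ _ two_ne_zero hs]
  field_simp

def blockWindow (M k m : ℕ) : Finset (Fin M) := univ.filter fun j => k ≤ j.1 ∧ j.1 < k + m

def templateAt {m M : ℕ} (T : Fin m → Bool) (k : ℕ) (j : Fin M) : Bool :=
  if h : j.1 - k < m then T ⟨j.1 - k, h⟩ else false

theorem card_blockWindow {M k m : ℕ} (hk : k + m ≤ M) : #(blockWindow M k m) = m := by
  rw [← card_map Fin.valEmbedding]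
  convert Nat.card_Ico k (k + m) using 2
  · ext n
    simp only [blockWindow, mem_map, mem_filter, mem_univ, true_and, Fin.valEmbedding_apply,
      mem_Ico]
    exact ⟨fun ⟨j, hj, hjn⟩ => hjn ▸ hj, fun hn => ⟨⟨n, by omega⟩, hn, rfl⟩⟩
  · omega

theorem occursAt_iff_forall_mem_blockWindow {m M : ℕ} (T : Fin m → Bool) (B : Fin M → Bool)
    (k : ℕ) : occursAt T B k ↔ ∀ j ∈ blockWindow M k m, B j = templateAt T k j := by
  simp only [occursAt, blockWindow, mem_filter, mem_univ, true_and, templateAt]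
  constructor
  · rintro hB j ⟨hkj, hjk⟩
    rw [dif_pos (by omega), ← hB ⟨j.1 - k, by omega⟩ (show k + (j.1 - k) < M by omega)]
    exact congrArg B (Fin.ext (by simp only; omega))
  · intro hB i hi
    rw [hB ⟨k + i.1, hi⟩ ⟨by simp, by simp⟩]
    simp

theorem unifExp_occursAt {m M : ℕ} (T : Fin m → Bool) {k : ℕ} (hk : k + m ≤ M) :
    unifExp M (fun B => if occursAt T B k then 1 else 0) = (2 ^ m)⁻¹ := by
  simp_rw [occursAt_iff_forall_mem_blockWindow]
  rw [unifExp_ite_forall_mem_eq, card_blockWindow hk]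

theorem unifExp_occursAt_and_of_add_le {m M : ℕ} (T : Fin m → Bool) {k l : ℕ}
    (hkl : k + m ≤ l) (hl : l + m ≤ M) :
    unifExp M (fun B => if occursAt T B k ∧ occursAt T B l then 1 else 0)
      = (2 ^ (2 * m))⁻¹ := by
  have hdisj : Disjoint (blockWindow M k m) (blockWindow M l m) := by
    simp only [blockWindow, disjoint_filter]
    omega
  simp_rw [occursAt_iff_forall_mem_blockWindow, forall_mem_union_piecewise hdisj]
  rw [unifExp_ite_forall_mem_eq, card_union_of_disjoint hdisj, card_blockWindow (by omega),
    card_blockWindow hl, two_mul]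

theorem not_occursAt_and_occursAt {m M : ℕ} {T : Fin m → Bool} (hT : NonSelfOverlapping T)
    (B : Fin M → Bool) {k l : ℕ} (hkl : k < l) (hlk : l < k + m) (hk : k + m ≤ M) :
    ¬ (occursAt T B k ∧ occursAt T B l) := by
  rintro ⟨hBk, hBl⟩
  obtain ⟨i, hi, hne⟩ := hT (l - k) (by omega) (by omega)
  -- both occurrences read the bit at position `l + i = k + (i + (l - k))`
  have hl := hBl ⟨i, by omega⟩ (show l + i < M by omega)
  have hk := hBk ⟨i + (l - k), by omega⟩ (show k + (i + (l - k)) < M by omega)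
  exact hne (hl.symm.trans ((congrArg B (Fin.ext (by simp only; omega))).trans hk))

theorem unifExp_occursAt_and_of_lt {m M : ℕ} {T : Fin m → Bool} (hT : NonSelfOverlapping T)
    {k l : ℕ} (hkl : k < l) (hl : l + m ≤ M) :
    unifExp M (fun B => if occursAt T B k ∧ occursAt T B l then 1 else 0)
      = if k + m ≤ l then (2 ^ (2 * m))⁻¹ else 0 := by
  split_ifs with hkml
  · exact unifExp_occursAt_and_of_add_le T hkml hl
  · have hnone (B : Fin M → Bool) : ¬ (occursAt T B k ∧ occursAt T B l) :=
      not_occursAt_and_occursAt hT B hkl (not_le.1 hkml) (by omega)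
    simp [unifExp, hnone]

theorem unifExp_occursAt_and {m M : ℕ} (hm : 1 ≤ m) {T : Fin m → Bool}
    (hT : NonSelfOverlapping T) {k l : ℕ} (hk : k + m ≤ M) (hl : l + m ≤ M) :
    unifExp M (fun B => if occursAt T B k ∧ occursAt T B l then 1 else 0)
      = (if k = l then (2 ^ m)⁻¹ else 0) + (if k + m ≤ l then (2 ^ (2 * m))⁻¹ else 0)
        + (if l + m ≤ k then (2 ^ (2 * m))⁻¹ else 0) := by
  rcases lt_trichotomy k l with hkl | rfl | hlk
  · rw [unifExp_occursAt_and_of_lt hT hkl hl, if_neg hkl.ne, if_neg (show ¬ l + m ≤ k by omega)]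
    ring
  · simp [unifExp_occursAt T hk, show ¬ k + m ≤ k by omega]
  · simp_rw [and_comm (a := occursAt T _ k)]
    rw [unifExp_occursAt_and_of_lt hT hlk hk, if_neg hlk.ne', if_neg (show ¬ k + m ≤ l by omega)]
    ring

theorem two_mul_sum_range_tsub {n L : ℕ} (h : n ≤ L) :
    2 * ∑ k ∈ range L, (n - k) = n * (n + 1) := by
  have hL : ∑ k ∈ range L, (n - k) = ∑ k ∈ range (n + 1), (n + 1 - 1 - k) := by
    rw [sum_range_succ, Nat.add_sub_cancel, Nat.sub_self, add_zero]
    refine (sum_subset (range_subset_range.2 h) fun k _ hk => ?_).symm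
    rw [mem_range, not_lt] at hk
    omega
  rw [hL, sum_range_reflect (fun k => k), mul_comm, sum_range_id_mul_two, Nat.add_sub_cancel,
    mul_comm]

theorem two_mul_sum_card_filter_add_le (L m : ℕ) :
    2 * ∑ k ∈ range L, #{l ∈ range L | k + m ≤ l} = (L - m) * (L - m + 1) := by
  have hcard : ∀ k, #{l ∈ range L | k + m ≤ l} = L - m - k := fun k => by
    have hIco : {l ∈ range L | k + m ≤ l} = Ico (k + m) L := by
      ext l
      simp only [mem_filter, mem_range, mem_Ico]
      omega
    rw [hIco, Nat.card_Ico]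
    omega
  simp_rw [hcard]
  exact two_mul_sum_range_tsub (Nat.sub_le L m)

theorem sum_range_sum_range_ite {L m : ℕ} (hL : m ≤ L) (a b : ℝ) :
    ∑ k ∈ range L, ∑ l ∈ range L,
        ((if k = l then a else 0) + (if k + m ≤ l then b else 0) + (if l + m ≤ k then b else 0))
      = L * a + (L - m) * (L - m + 1) * b := by
  have hfar : ∑ k ∈ range L, ∑ l ∈ range L, (if k + m ≤ l then b else 0)
      = (∑ k ∈ range L, (#{l ∈ range L | k + m ≤ l} : ℝ)) * b := by
    simp_rw [← sum_filter, sum_const, nsmul_eq_mul, ← sum_mul]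
  have hcount := congrArg (Nat.cast : ℕ → ℝ) (two_mul_sum_card_filter_add_le L m)
  push_cast [Nat.cast_sub hL] at hcount
  simp only [sum_add_distrib, sum_ite_eq]
  rw [sum_ite_mem, inter_self, sum_const, card_range, nsmul_eq_mul,
    sum_comm (f := fun k l => if l + m ≤ k then b else 0), hfar]
  linear_combination b * hcount

theorem variance_occCount (m M : ℕ) (hm : 1 ≤ m) (T : Fin m → Bool)
    (hT : NonSelfOverlapping T) (hL : m ≤ M + 1 - m) :
    unifExp M (fun B => (occCount T B : ℝ) ^ 2)
        - (unifExp M (fun B => (occCount T B : ℝ))) ^ 2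
      = ((M : ℝ) - m + 1) / 2 ^ m
        - ((2 * (m : ℝ) - 1) * ((M : ℝ) - m + 1) - m * (m - 1)) / 2 ^ (2 * m) := by
  set L := M + 1 - m
  have hwindow {k : ℕ} (hk : k ∈ range L) : k + m ≤ M := by
    rw [mem_range] at hk; omega
  have hcount (B : Fin M → Bool) :
      (occCount T B : ℝ) = ∑ k ∈ range L, if occursAt T B k then 1 else 0 :=
    natCast_card_filter _ _
  have hmean : unifExp M (fun B => (occCount T B : ℝ)) = L * (2 ^ m)⁻¹ := by
    simp_rw [hcount, unifExp_sum]
    rw [sum_congr rfl fun k hk => unifExp_occursAt T (hwindow hk), sum_const, card_range,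
      nsmul_eq_mul]
  have hsecond : unifExp M (fun B => (occCount T B : ℝ) ^ 2)
      = L * (2 ^ m)⁻¹ + (L - m) * (L - m + 1) * (2 ^ (2 * m))⁻¹ := by
    simp_rw [hcount, sq, sum_mul_sum, ite_zero_mul_ite_zero, mul_one, unifExp_sum]
    rw [sum_congr rfl fun k hk => sum_congr rfl fun l hl =>
      unifExp_occursAt_and hm hT (hwindow hk) (hwindow hl)]
    exact sum_range_sum_range_ite hL _ _
  have hLreal : (L : ℝ) = M - m + 1 := by
    rw [Nat.cast_sub (by omega)]; push_cast; ring
  rw [hsecond, hmean, hLreal, pow_mul']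
  field_simp
  ring
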